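/- arXiv:1705.09673 — 5 statements merged into one kernel-verified Lean document; each statement's English description precedes it below -/
import Mathlib

section
/- Let p be a prime with p ≤ k and let r ≥ 2. Then w(r, k) > p · (w(r - ⌈r/p⌉, k) - 1), where w denotes the van der Waerden number. -/
/-- `hasAP c N k` : the coloring `c` of `{1,...,N}` contains a monochromatic
arithmetic progression of length `k` with positive common difference. -/
def hasAP (c : ℕ → ℕ) (N k : ℕ) : Prop :=
  ∃ a d, 1 ≤ a ∧ 1 ≤ d ∧ a + (k - 1) * d ≤ N ∧ ∀ i < k, c (a + i * d) = c a

/-- `validColoring r k N c` : `c` is an `r`-coloring of `{1,...,N}` with no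
monochromatic `k`-term arithmetic progression. -/
def validColoring (r k N : ℕ) (c : ℕ → ℕ) : Prop :=
  (∀ n, 1 ≤ n → n ≤ N → 1 ≤ c n ∧ c n ≤ r) ∧ ¬ hasAP c N k

/-- The van der Waerden number: least `N` such that no valid `r`-coloring of
`{1,...,N}` (avoiding `k`-term monochromatic APs) exists. -/
noncomputable def vdw (r k : ℕ) : ℕ := sInf {N | ¬ ∃ c : ℕ → ℕ, validColoring r k N c}

/-- The block `S_i(r,k)`: `j`-th entry (`1 ≤ j ≤ p`) is `((i + j - 2) % r) + 1`. -/
def Sblock (r i j : ℕ) : ℕ := ((i + j - 2) % r) + 1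

/-! Let `s = r - ⌈r/p⌉` and let `χ` be an `s`-coloring of `{1, …, W}` without monochromatic
`k`-term progressions. Relabel its colors by the first `s` positive non-multiples of `p`, which are
all `< r`, and replace each `b ≤ W` by a block of `p` consecutive integers colored cyclically
mod `r`, starting from the color of `b`. A progression whose difference is a multiple of `p` meets
all blocks at the same offset, so it is monochromatic only if the progression of blocks is. If `p`
does not divide the difference, the first `p ≤ k` terms meet every offset mod `p`; the term whose
offset is the common color mod `p` forces the start color of its block to be a multiple of `p`.
Taking `W = w(s, k) - 1` gives a good `r`-coloring of `{1, …, p W}`. -/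

open Finset Combinatorics

theorem Combinatorics.Line.sum_comp_apply {α ι M : Type*} [Fintype ι] [AddCommMonoid M]
    (l : Line α ι) (f : α → M) (x : α) :
    ∑ i, f (l x i) = #{i | l.idxFun i = none} • f x + ∑ i, (l.idxFun i).elim 0 f := by
  have h : ∀ i, f (l x i) = (if l.idxFun i = none then f x else 0) + (l.idxFun i).elim 0 f := by
    intro i
    cases hi : l.idxFun i <;> simp [hi]
  simp only [h, sum_add_distrib, sum_ite, sum_const_zero, add_zero, sum_const]

-- The digit sum `v ↦ ∑ i, v i` maps a combinatorial line in `ι → Fin k` to a `k`-term progression.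
theorem exists_mono_arithProgression {κ : Type*} [Finite κ] {k : ℕ} (hk : 0 < k) :
    ∃ N, ∀ C : ℕ → κ, ∃ a d, 0 < d ∧ a + (k - 1) * d ≤ N ∧ ∀ i < k, C (a + i * d) = C a := by
  obtain ⟨ι, _, hι⟩ := Line.exists_mono_in_high_dimension (Fin k) κ
  refine ⟨Fintype.card ι * (k - 1), fun C => ?_⟩
  obtain ⟨l, c, hl⟩ := hι fun v => C (∑ i, (v i : ℕ))
  set d := #{i | l.idxFun i = none}
  set a := ∑ i, (l.idxFun i).elim 0 Fin.val
  have hsum : ∀ x : Fin k, ∑ i, (l x i : ℕ) = a + x * d := by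
    intro x
    rw [l.sum_comp_apply Fin.val, smul_eq_mul, add_comm, mul_comm]
  have hd : 0 < d := card_pos.2 ⟨_, mem_filter.2 ⟨mem_univ _, l.proper.choose_spec⟩⟩
  refine ⟨a, d, hd, ?_, fun i hi => ?_⟩
  · calc a + (k - 1) * d = ∑ i, (l ⟨k - 1, by omega⟩ i : ℕ) := (hsum ⟨k - 1, by omega⟩).symm
      _ ≤ ∑ _i : ι, (k - 1) := sum_le_sum fun i _ => Nat.le_sub_one_of_lt (l _ i).isLt
      _ = Fintype.card ι * (k - 1) := by simp
  · have hi := hl ⟨i, hi⟩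
    have h0 := hl ⟨0, hk⟩
    simp only [hsum] at hi h0
    simpa using hi.trans h0.symm

theorem exists_not_validColoring (r : ℕ) {k : ℕ} (hk : 0 < k) :
    ∃ N, ¬ ∃ c, validColoring r k N c := by
  obtain ⟨N, hN⟩ := exists_mono_arithProgression (κ := Fin (r + 1)) hk
  refine ⟨N + 1, fun ⟨c, hc, hAP⟩ => hAP ?_⟩
  obtain ⟨a, d, hd, hlast, hmono⟩ := hN fun n => ⟨min (c (n + 1)) r, by omega⟩
  refine ⟨a + 1, d, by omega, hd, by omega, fun i hi => ?_⟩
  have hid : i * d ≤ (k - 1) * d := Nat.mul_le_mul_right d (by omega)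
  have hci := (hc (a + i * d + 1) (by omega) (by omega)).2
  have hc0 := (hc (a + 1) (by omega) (by omega)).2
  have h := congrArg Fin.val (hmono i hi)
  simp only at h
  rw [add_right_comm]
  omega

theorem validColoring.mono {r k N M : ℕ} {c : ℕ → ℕ} (h : validColoring r k N c) (hMN : M ≤ N) :
    validColoring r k M c :=
  ⟨fun n h1 h2 => h.1 n h1 (h2.trans hMN),
    fun ⟨a, d, h1, h2, h3, h4⟩ => h.2 ⟨a, d, h1, h2, h3.trans hMN, h4⟩⟩

theorem exists_validColoring_vdw_sub_one (r k : ℕ) : ∃ c, validColoring r k (vdw r k - 1) c := by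
  rcases Nat.eq_zero_or_pos (vdw r k) with h | h
  · refine ⟨id, fun n _ _ => by omega, fun ⟨a, _, ha, _, hlast, _⟩ => by omega⟩
  · by_contra hc
    exact Nat.notMem_of_lt_sInf (show vdw r k - 1 < vdw r k by omega) hc

theorem lt_vdw_of_validColoring {r k N : ℕ} {c : ℕ → ℕ} (hk : 0 < k)
    (hc : validColoring r k N c) : N < vdw r k := by
  by_contra h
  exact Nat.sInf_mem (exists_not_validColoring r hk) ⟨c, hc.mono (not_lt.1 h)⟩

theorem hasAP_of_comp {f c : ℕ → ℕ} {N k : ℕ} (hf : Function.Injective f)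
    (h : hasAP (f ∘ c) N k) : hasAP c N k :=
  let ⟨a, d, h1, h2, h3, h4⟩ := h
  ⟨a, d, h1, h2, h3, fun i hi => hf (h4 i hi)⟩

/-- For `p ≥ 2` and `m ≥ 1`, `nonMultiple p m` is the `m`-th positive integer not divisible
by `p`. -/
def nonMultiple (p m : ℕ) : ℕ := m + (m - 1) / (p - 1)

theorem nonMultiple_strictMono (p : ℕ) : StrictMono (nonMultiple p) := fun m n h => by
  have := Nat.div_le_div_right (c := p - 1) (show m - 1 ≤ n - 1 by omega)
  unfold nonMultiple
  omega

theorem nonMultiple_not_dvd {p m : ℕ} (hp : 2 ≤ p) (hm : 0 < m) : ¬ p ∣ nonMultiple p m := by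
  obtain ⟨p, rfl⟩ : ∃ p', p = p' + 1 := ⟨p - 1, by omega⟩
  have hdiv := Nat.div_add_mod (m - 1) p
  have hmod := Nat.mod_lt (m - 1) (show 0 < p by omega)
  have h : nonMultiple (p + 1) m = (p + 1) * ((m - 1) / p) + ((m - 1) % p + 1) := by
    simp only [nonMultiple, Nat.add_sub_cancel]
    rw [add_mul]
    omega
  rw [h, Nat.dvd_add_right (dvd_mul_right _ _)]
  intro hdvd
  have := Nat.le_of_dvd (by omega) hdvd
  omega

theorem nonMultiple_sub_lt {p q r : ℕ} (hp : 2 ≤ p) (hr : 0 < r) (hq : r ≤ p * q) :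
    nonMultiple p (r - q) < r := by
  rcases le_or_gt r q with hrq | hqr
  · simp [nonMultiple, Nat.sub_eq_zero_of_le hrq, hr]
  have hpq : q * (p - 1) + q = p * q := by
    rw [Nat.mul_sub_one, mul_comm]
    exact Nat.sub_add_cancel (Nat.le_mul_of_pos_left q (by omega))
  have : (r - q - 1) / (p - 1) < q := Nat.div_lt_of_lt_mul (by rw [mul_comm]; omega)
  unfold nonMultiple
  omega

theorem add_mod_mod_ne {p r g c : ℕ} (hg : g < r) (hpg : ¬ p ∣ g) (hc : c < r) :
    (g + c % p) % r ≠ c := by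
  intro h
  have := Nat.mod_add_div c p
  have := Nat.mod_le c p
  rcases lt_or_ge (g + c % p) r with hlt | hge
  · rw [Nat.mod_eq_of_lt hlt] at h
    exact hpg ⟨c / p, by omega⟩
  · rw [Nat.mod_eq_sub_mod hge, Nat.mod_eq_of_lt (by omega)] at h
    omega

theorem exists_lt_add_mul_mod_eq {p d : ℕ} (hp : p.Prime) (hd : ¬ p ∣ d) (a t : ℕ) :
    ∃ i < p, (a + i * d) % p = t % p := by
  have : Fact p.Prime := ⟨hp⟩
  have hd' : (d : ZMod p) ≠ 0 := by rwa [Ne, ZMod.natCast_eq_zero_iff]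
  set y : ZMod p := ((t : ZMod p) - a) * (d : ZMod p)⁻¹
  refine ⟨y.val, y.val_lt, (ZMod.natCast_eq_natCast_iff' _ _ _).1 ?_⟩
  push_cast
  rw [ZMod.natCast_zmod_val, mul_assoc, inv_mul_cancel₀ hd']
  ring

/-- The `n` with `(n - 1) / p + 1 = b` form the `b`-th block of `p` consecutive integers; it is
colored by the paper's block `S_{G b + 1}`, i.e. cyclically by `G b + 1, G b + 2, …` modulo `r`. -/
def blowUp (p r : ℕ) (G : ℕ → ℕ) (n : ℕ) : ℕ := Sblock r (G ((n - 1) / p + 1) + 1) ((n - 1) % p + 1)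

theorem blowUp_add_one (p r : ℕ) (G : ℕ → ℕ) (n : ℕ) :
    blowUp p r G (n + 1) = (G (n / p + 1) + n % p) % r + 1 := by
  simp only [blowUp, Sblock, Nat.add_sub_cancel]
  congr 2
  omega

theorem div_add_one_le_of_lt_mul {a d p W k i : ℕ} (hi : i < k) (hlast : a + (k - 1) * d < p * W) :
    (a + i * d) / p + 1 ≤ W :=
  Nat.div_lt_of_lt_mul
    ((Nat.add_le_add_left (Nat.mul_le_mul_right d (show i ≤ k - 1 by omega)) a).trans_lt hlast)

theorem hasAP_of_blowUp_mul {p r W k a e : ℕ} {G : ℕ → ℕ}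
    (hG : ∀ b, 1 ≤ b → b ≤ W → G b < r) (he : 0 < e) (hlast : a + (k - 1) * (p * e) < p * W)
    (hmono : ∀ i < k, blowUp p r G (a + i * (p * e) + 1) = blowUp p r G (a + 1)) :
    hasAP G W k := by
  have hp : 0 < p := Nat.pos_of_ne_zero fun h => by simp [h] at hlast
  have hdiv : ∀ i, (a + i * (p * e)) / p = a / p + i * e := fun i => by
    rw [mul_left_comm, Nat.add_mul_div_left _ _ hp]
  have hmod : ∀ i, (a + i * (p * e)) % p = a % p := fun i => by
    rw [mul_left_comm, Nat.add_mul_mod_self_left]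
  have hblock : ∀ i < k, G (a / p + i * e + 1) < r := fun i hi =>
    hG _ (Nat.le_add_left 1 _) (by simpa [hdiv] using div_add_one_le_of_lt_mul hi hlast)
  refine ⟨a / p + 1, e, Nat.le_add_left 1 _, he, ?_, fun i hi => ?_⟩
  · have := Nat.div_lt_of_lt_mul hlast
    rw [hdiv] at this
    omega
  · have h := hmono i hi
    rw [blowUp_add_one, blowUp_add_one, hmod, hdiv] at h
    have h' := Nat.ModEq.add_right_cancel' _ (Nat.succ_injective h)
    rw [Nat.ModEq, Nat.mod_eq_of_lt (hblock i hi),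
      Nat.mod_eq_of_lt (by simpa using hblock 0 (by omega))] at h'
    rwa [add_right_comm]

theorem blowUp_ne_of_not_dvd {p r k W a d : ℕ} {G : ℕ → ℕ} (hp : p.Prime) (hpk : p ≤ k)
    (hG : ∀ b, 1 ≤ b → b ≤ W → G b < r ∧ ¬ p ∣ G b) (hd : ¬ p ∣ d)
    (hlast : a + (k - 1) * d < p * W) :
    ∃ i < k, blowUp p r G (a + i * d + 1) ≠ blowUp p r G (a + 1) := by
  set C := (G (a / p + 1) + a % p) % r
  obtain ⟨i, hip, hi⟩ := exists_lt_add_mul_mod_eq hp hd a C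
  have hik : i < k := hip.trans_le hpk
  obtain ⟨hGr, hGp⟩ := hG _ (Nat.le_add_left 1 _) (div_add_one_le_of_lt_mul hik hlast)
  refine ⟨i, hik, ?_⟩
  rw [blowUp_add_one, blowUp_add_one, hi]
  exact fun h => add_mod_mod_ne hGr hGp (Nat.mod_lt _ (by omega)) (Nat.succ_injective h)

theorem validColoring_blowUp {p r k s W : ℕ} {χ : ℕ → ℕ} (hp : p.Prime) (hpk : p ≤ k)
    (hs : nonMultiple p s < r) (hχ : validColoring s k W χ) :
    validColoring r k (p * W) (blowUp p r (nonMultiple p ∘ χ)) := by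
  obtain ⟨hχr, hχAP⟩ := hχ
  set G := nonMultiple p ∘ χ
  have hG : ∀ b, 1 ≤ b → b ≤ W → G b < r ∧ ¬ p ∣ G b :=
    fun b h1 h2 => ⟨((nonMultiple_strictMono p).monotone (hχr b h1 h2).2).trans_lt hs,
      nonMultiple_not_dvd hp.two_le (hχr b h1 h2).1⟩
  refine ⟨fun n _ _ => ⟨Nat.le_add_left _ _, Nat.mod_lt _ (by omega)⟩, ?_⟩
  rintro ⟨a, d, ha, hd, hlast, hmono⟩
  obtain ⟨a, rfl⟩ : ∃ a', a = a' + 1 := ⟨a - 1, by omega⟩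
  have hlast' : a + (k - 1) * d < p * W := by omega
  have hmono' : ∀ i < k, blowUp p r G (a + i * d + 1) = blowUp p r G (a + 1) := fun i hi => by
    rw [← hmono i hi, add_right_comm]
  by_cases hpd : p ∣ d
  · obtain ⟨e, rfl⟩ := hpd
    exact hχAP (hasAP_of_comp (nonMultiple_strictMono p).injective
      (hasAP_of_blowUp_mul (fun b h1 h2 => (hG b h1 h2).1) (Nat.pos_of_mul_pos_left hd)
        hlast' hmono'))
  · obtain ⟨i, hi, hne⟩ := blowUp_ne_of_not_dvd hp hpk hG hpd hlast'
    exact hne (hmono' i hi)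

theorem vdw_recurrence_general (p r k : ℕ) (hp : p.Prime) (hpk : p ≤ k) (hr : 2 ≤ r) :
    p * (vdw (r - (r + p - 1) / p) k - 1) < vdw r k := by
  obtain ⟨χ, hχ⟩ := exists_validColoring_vdw_sub_one (r - (r + p - 1) / p) k
  have hceil : r ≤ p * ((r + p - 1) / p) := by
    rw [← Nat.ceilDiv_eq_add_pred_div]
    exact le_smul_ceilDiv hp.pos
  have hs := nonMultiple_sub_lt hp.two_le (by omega) hceil
  exact lt_vdw_of_validColoring (hp.pos.trans_le hpk) (validColoring_blowUp hp hpk hs hχ)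

/-- The recurrence: for a prime `p ≤ k` and `r ≥ 2` with `r - ⌈r/p⌉ ≥ 1`,
`w(r,k) > p * (w(r - ⌈r/p⌉, k) - 1)`, where `⌈r/p⌉ = (r + p - 1) / p`. -/
theorem vdw_recurrence (p r k : ℕ) (hp : p.Prime) (hpk : p ≤ k) (hr : 2 ≤ r)
    (hsub : 1 ≤ r - (r + p - 1) / p) :
    p * (vdw (r - (r + p - 1) / p) k - 1) < vdw r k :=
  vdw_recurrence_general p r k hp hpk hr
end

section
/- Suppose there exists an s-coloring χ of {1, ..., N} with no monochromatic k-term arithmetic progression, and for each color i ∈ {1,...,s} let B_i : {0,...,p-1} → {1,...,r} be a block of length p, such that any concatenation of these blocks (in any order, with repetition) of any length contains no monochromatic k-term arithmetic progression with common difference not divisible by p, and such that all blocks are 'aligned' in the sense that for each color c of {1,...,r}, all positions of c within any single block B_i lie in a single residue class mod p determined by i and c, with distinct blocks giving distinct residue classes for c. Then the blow-up coloring χ' of {1, ..., pN} defined by χ'(p(t-1) + j) = B_{χ(t)}(j-1) for 1 ≤ j ≤ p contains no monochromatic k-term arithmetic progression. -/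
/-! An AP in the blow-up whose difference is a multiple `p * e` sits at one position `j` in every
block it meets, and alignment says that at a fixed position two blocks sharing a colour are equal;
so the blocks it meets have one colour under `χ` and form an AP of difference `e` in `{1,...,N}`.
An AP whose difference is not divisible by `p` lives in a concatenation of blocks, where it is
excluded by assumption. -/

/-- The concatenation of the blocks `B (σ 0), B (σ 1), ...`, as a colouring of `{1, 2, ...}`. -/
def blowup (p : ℕ) (σ : ℕ → ℕ) (B : ℕ → ℕ → ℕ) (x : ℕ) : ℕ :=
  B (σ ((x - 1) / p)) ((x - 1) % p)

theorem add_mul_le_add_pred_mul {a d i k : ℕ} (hi : i < k) : a + i * d ≤ a + (k - 1) * d :=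
  Nat.add_le_add_left (Nat.mul_le_mul_right d (Nat.le_sub_one_of_lt hi)) a

section Blowup

variable {p : ℕ} {σ : ℕ → ℕ} {B : ℕ → ℕ → ℕ}

theorem sub_one_div_lt_of_le_mul {x N : ℕ} (hx : 1 ≤ x) (hxN : x ≤ p * N) : (x - 1) / p < N :=
  Nat.div_lt_of_lt_mul (by omega)

theorem add_mul_sub_one_div (hp : 0 < p) {x : ℕ} (hx : 1 ≤ x) (n : ℕ) :
    (x + n * p - 1) / p = (x - 1) / p + n := by
  rw [show x + n * p - 1 = x - 1 + n * p by omega, Nat.add_mul_div_right _ _ hp]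

theorem blowup_add_mul (hp : 0 < p) {x : ℕ} (hx : 1 ≤ x) (n : ℕ) :
    blowup p σ B (x + n * p) = B (σ ((x - 1) / p + n)) ((x - 1) % p) := by
  rw [blowup, add_mul_sub_one_div hp hx, show x + n * p - 1 = x - 1 + n * p by omega,
    Nat.add_mul_mod_self_right]

theorem blowup_congr {σ' : ℕ → ℕ} {N : ℕ} (h : ∀ t < N, σ t = σ' t) {x : ℕ} (hx : 1 ≤ x)
    (hxN : x ≤ p * N) : blowup p σ B x = blowup p σ' B x := by
  rw [blowup, blowup, h _ (sub_one_div_lt_of_le_mul hx hxN)]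

end Blowup

theorem eq_of_aligned {p s : ℕ} {B ρ : ℕ → ℕ → ℕ}
    (hρ : ∀ i c j, 1 ≤ i → i ≤ s → j < p → B i j = c → j = ρ i c)
    (hρ_ne : ∀ c i i', 1 ≤ i → i ≤ s → 1 ≤ i' → i' ≤ s → i ≠ i' → ρ i c ≠ ρ i' c)
    {i i' j : ℕ} (hi : 1 ≤ i ∧ i ≤ s) (hi' : 1 ≤ i' ∧ i' ≤ s) (hj : j < p)
    (h : B i j = B i' j) : i = i' := by
  by_contra hne
  exact hρ_ne (B i' j) i i' hi.1 hi.2 hi'.1 hi'.2 hne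
    ((hρ i _ j hi.1 hi.2 hj h).symm.trans (hρ i' _ j hi'.1 hi'.2 hj rfl))

theorem hasAP_of_blowup_mono_of_dvd {p s k N a e : ℕ} {χ : ℕ → ℕ} {B ρ : ℕ → ℕ → ℕ}
    (hχ : ∀ n, 1 ≤ n → n ≤ N → 1 ≤ χ n ∧ χ n ≤ s)
    (hρ : ∀ i c j, 1 ≤ i → i ≤ s → j < p → B i j = c → j = ρ i c)
    (hρ_ne : ∀ c i i', 1 ≤ i → i ≤ s → 1 ≤ i' → i' ≤ s → i ≠ i' → ρ i c ≠ ρ i' c)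
    (ha : 1 ≤ a) (he : 1 ≤ e) (hle : a + (k - 1) * (p * e) ≤ p * N)
    (hmono : ∀ i < k, blowup p (fun t => χ (t + 1)) B (a + i * (p * e)) =
      blowup p (fun t => χ (t + 1)) B a) :
    hasAP χ N k := by
  have hp : 0 < p := Nat.pos_of_ne_zero fun h => by simp [h] at hle; omega
  have hblock_lt : ∀ i, i ≤ k - 1 → (a - 1) / p + i * e < N := fun i hi => by
    have hx : a + i * e * p ≤ p * N := by
      calc a + i * e * p = a + i * (p * e) := by ring
        _ ≤ a + (k - 1) * (p * e) := Nat.add_le_add_left (Nat.mul_le_mul_right _ hi) a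
        _ ≤ p * N := hle
    simpa [add_mul_sub_one_div hp ha] using sub_one_div_lt_of_le_mul (by omega) hx
  have hcolour : ∀ i, i ≤ k - 1 →
      1 ≤ χ ((a - 1) / p + i * e + 1) ∧ χ ((a - 1) / p + i * e + 1) ≤ s :=
    fun i hi => hχ _ (Nat.le_add_left _ _) (hblock_lt i hi)
  refine ⟨(a - 1) / p + 1, e, Nat.le_add_left _ _, he, by linarith [hblock_lt (k - 1) le_rfl],
    fun i hi => ?_⟩
  have hblock := hmono i hi
  rw [show i * (p * e) = i * e * p by ring, blowup_add_mul hp ha] at hblock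
  rw [show (a - 1) / p + 1 + i * e = (a - 1) / p + i * e + 1 by ring]
  exact eq_of_aligned hρ hρ_ne (hcolour i (by omega)) (by simpa using hcolour 0 (Nat.zero_le _))
    (Nat.mod_lt _ hp) hblock

theorem blowup_valid_general (p k s N : ℕ)
    (χ : ℕ → ℕ) (hχ : validColoring s k N χ)
    (B : ℕ → ℕ → ℕ)
    (hconcat : ∀ m : ℕ, ∀ σ : ℕ → ℕ, (∀ t, 1 ≤ σ t ∧ σ t ≤ s) →
      ∀ a d, 1 ≤ a → 1 ≤ d → ¬ p ∣ d → a + (k - 1) * d ≤ p * m →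
        ¬ (∀ i < k, B (σ ((a + i * d - 1) / p)) ((a + i * d - 1) % p)
              = B (σ ((a - 1) / p)) ((a - 1) % p)))
    (halign : ∃ ρ : ℕ → ℕ → ℕ,
      (∀ i c j, 1 ≤ i → i ≤ s → j < p → B i j = c → j = ρ i c) ∧
      (∀ c i i', 1 ≤ i → i ≤ s → 1 ≤ i' → i' ≤ s → i ≠ i' → ρ i c ≠ ρ i' c)) :
    ¬ hasAP (fun x => B (χ ((x - 1) / p + 1)) ((x - 1) % p)) (p * N) k := by
  rintro ⟨a, d, ha, hd, hle, hmono⟩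
  by_cases hpd : p ∣ d
  · obtain ⟨e, rfl⟩ := hpd
    obtain ⟨ρ, hρ, hρ_ne⟩ := halign
    exact hχ.2 (hasAP_of_blowup_mono_of_dvd hχ.1 hρ hρ_ne ha (Nat.pos_of_mul_pos_left hd) hle hmono)
  · have hN : 1 ≤ N := Nat.pos_of_mul_pos_left (by omega : 0 < p * N)
    have hterm : ∀ i < k, a + i * d ≤ p * N := fun i hi => (add_mul_le_add_pred_mul hi).trans hle
    -- any colouring of the blocks past `N` by colours in `{1,...,s}` will do
    set σ : ℕ → ℕ := fun t => χ (min t (N - 1) + 1)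
    have hσ_eq : ∀ t < N, χ (t + 1) = σ t := fun t ht => by
      simp [σ, Nat.min_eq_left (by omega : t ≤ N - 1)]
    refine hconcat N σ (fun t => hχ.1 _ (by omega) (by omega)) a d ha hd hpd hle fun i hi => ?_
    have hblock : blowup p (fun t => χ (t + 1)) B (a + i * d) =
        blowup p (fun t => χ (t + 1)) B a := hmono i hi
    rw [blowup_congr hσ_eq (by omega) (hterm i hi),
      blowup_congr hσ_eq ha (by simpa using hterm 0 (by omega))] at hblock
    exact hblock

/-- Blow-up lemma: given a valid `s`-coloring `χ` of `{1,...,N}` and blocks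
`B i : {0,...,p-1} → {1,...,r}` such that any concatenation of the blocks has
no monochromatic `k`-term AP with difference not divisible by `p`, and blocks
are aligned (each color occupies a single position `ρ i c` within block `i`,
distinct blocks giving distinct positions for each color), then the blow-up
coloring of `{1,...,pN}` has no monochromatic `k`-term AP. -/
theorem blowup_valid (p k s r N : ℕ) (hp : p.Prime) (hpk : p ≤ k) (hN : 1 ≤ N)
    (χ : ℕ → ℕ) (hχ : validColoring s k N χ)
    (B : ℕ → ℕ → ℕ)
    (hBr : ∀ i j, 1 ≤ i → i ≤ s → j < p → 1 ≤ B i j ∧ B i j ≤ r)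
    (hconcat : ∀ m : ℕ, ∀ σ : ℕ → ℕ, (∀ t, 1 ≤ σ t ∧ σ t ≤ s) →
      ∀ a d, 1 ≤ a → 1 ≤ d → ¬ p ∣ d → a + (k - 1) * d ≤ p * m →
        ¬ (∀ i < k, B (σ ((a + i * d - 1) / p)) ((a + i * d - 1) % p)
              = B (σ ((a - 1) / p)) ((a - 1) % p)))
    (halign : ∃ ρ : ℕ → ℕ → ℕ,
      (∀ i c j, 1 ≤ i → i ≤ s → j < p → B i j = c → j = ρ i c) ∧
      (∀ c i i', 1 ≤ i → i ≤ s → 1 ≤ i' → i' ≤ s → i ≠ i' → ρ i c ≠ ρ i' c)) :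
    ¬ hasAP (fun x => B (χ ((x - 1) / p + 1)) ((x - 1) % p)) (p * N) k :=
  blowup_valid_general p k s N χ hχ B hconcat halign
end

section
/- Fix r ≥ 2, a prime p with r ≤ p ≤ k, and define blocks S_i for i ∈ {2,...,r} as the p-tuples with j-th entry ((i+j-2) mod r)+1. Let T be the concatenation of any finite sequence of blocks chosen from {S_2, ..., S_r} (with repetition allowed, in any order). Then every monochromatic arithmetic progression of length k in T has common difference divisible by p. -/
/-!
If `p ∤ d`, then the first `p` terms of the progression meet every residue class modulo `p`,
so some term sits at offset `j = c` inside its block, where `c` is the colour of the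
progression. But the `j`-th entry of `S_s` is congruent to `j + s - 1` modulo `r`, which
differs from `j` because `1 ≤ s - 1 < r`.
-/

theorem one_le_Sblock (r i j : ℕ) : 1 ≤ Sblock r i j :=
  Nat.le_add_left 1 _

theorem Sblock_le {r : ℕ} (hr : 0 < r) (i j : ℕ) : Sblock r i j ≤ r :=
  Nat.mod_lt _ hr

theorem Sblock_ne_self {r s j : ℕ} (hs : 2 ≤ s) (hsr : s ≤ r) (hj : 1 ≤ j) (hjr : j ≤ r) :
    Sblock r s j ≠ j := by
  intro h
  rw [Sblock] at h
  have hmod : (s - 1 + (j - 1)) % r = (0 + (j - 1)) % r := by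
    rw [zero_add, Nat.mod_eq_of_lt (by omega : j - 1 < r),
      show s - 1 + (j - 1) = s + j - 2 by omega]
    omega
  have hdvd : r ∣ s - 1 := (Nat.modEq_zero_iff_dvd).mp (Nat.ModEq.add_right_cancel' _ hmod)
  have := Nat.le_of_dvd (by omega) hdvd
  omega

theorem exists_lt_add_mul_mod_eq_s8 {p d : ℕ} [NeZero p] (hdp : d.Coprime p) (b c : ℕ) :
    ∃ i < p, (b + i * d) % p = c % p := by
  refine ⟨(((c : ZMod p) - b) * (d : ZMod p)⁻¹).val, ZMod.val_lt _, ?_⟩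
  rw [← ZMod.natCast_eq_natCast_iff', Nat.cast_add, Nat.cast_mul, ZMod.natCast_val,
    ZMod.cast_id, mul_assoc, ZMod.inv_mul_of_unit _ ((ZMod.isUnit_iff_coprime d p).mpr hdp)]
  ring

theorem concat_no_small_diff_general (r p k m : ℕ) (hp : p.Prime)
    (hrp : r ≤ p) (hpk : p ≤ k)
    (σ : ℕ → ℕ) (hσ : ∀ t, 2 ≤ σ t ∧ σ t ≤ r) :
    ∀ a d, 1 ≤ a → 1 ≤ d → a + (k - 1) * d ≤ p * m →
      (∀ i < k,
          Sblock r (σ ((a + i * d - 1) / p)) ((a + i * d - 1) % p + 1)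
            = Sblock r (σ ((a - 1) / p)) ((a - 1) % p + 1)) →
      p ∣ d := by
  intro a d ha _ _ hmono
  by_contra hpd
  have : NeZero p := ⟨hp.ne_zero⟩
  have hr : 0 < r := by have := hσ 0; omega
  set c := Sblock r (σ ((a - 1) / p)) ((a - 1) % p + 1)
  have hc1 : 1 ≤ c := one_le_Sblock ..
  have hcr : c ≤ r := Sblock_le hr ..
  obtain ⟨i, hip, hi⟩ := exists_lt_add_mul_mod_eq_s8
    ((hp.coprime_iff_not_dvd.mpr hpd).symm) (a - 1) (c - 1)
  have hc := hmono i (hip.trans_le hpk)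
  rw [show a + i * d - 1 = a - 1 + i * d by omega, hi, Nat.mod_eq_of_lt (by omega),
    Nat.sub_add_cancel hc1] at hc
  exact Sblock_ne_self (hσ _).1 (hσ _).2 hc1 hcr hc

/-- Lemma 1, case `r ≤ p`: if `T` is the concatenation of blocks chosen (with
repetition, in any order) from `{S_2, ..., S_r}`, then every monochromatic
`k`-term AP in `T` has common difference divisible by `p`. -/
theorem concat_no_small_diff (r p k m : ℕ) (hr : 2 ≤ r) (hp : p.Prime)
    (hrp : r ≤ p) (hpk : p ≤ k)
    (σ : ℕ → ℕ) (hσ : ∀ t, 2 ≤ σ t ∧ σ t ≤ r) :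
    ∀ a d, 1 ≤ a → 1 ≤ d → a + (k - 1) * d ≤ p * m →
      (∀ i < k,
          Sblock r (σ ((a + i * d - 1) / p)) ((a + i * d - 1) % p + 1)
            = Sblock r (σ ((a - 1) / p)) ((a - 1) % p + 1)) →
      p ∣ d :=
  concat_no_small_diff_general r p k m hp hrp hpk σ hσ
end

section
/- Let p be a prime with p ≤ k, let χ be a coloring of {1,...,pN} obtained by partitioning into N consecutive blocks of length p, where each block is one of finitely many fixed block-types, each block-type being a p-tuple of colors, and where positions of any given color within a single block-type all lie in one residue class mod p, with distinct block-types assigning that color to distinct residue classes. If x, x+mp, x+2mp, ..., x+(k-1)mp is a monochromatic arithmetic progression in χ with common difference mp (m ≥ 1), then all the blocks containing the terms x + imp are of the same block-type, and the block indices t_0, t_1, ..., t_{k-1} (where term i lies in block t_i) form an arithmetic progression with common difference m. -/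
/-!
Because the common difference `m * p` is a multiple of `p`, all terms of the progression sit at
the same offset in their blocks, and consecutive terms lie exactly `m` blocks apart. In each
block-type a colour occupies a single offset, and distinct types put it at distinct offsets, so
the common colour at the common offset determines the block-type.
-/

/-- Positions are `1`-based: position `y ≥ 1` lies in block `⌈y / p⌉`, at offset `(y - 1) % p`. -/
def blockIndex (p y : ℕ) : ℕ := (y - 1) / p + 1

def blockOffset (p y : ℕ) : ℕ := (y - 1) % p

theorem blockIndex_add_mul {p y : ℕ} (hy : 1 ≤ y) (hp : 0 < p) (d : ℕ) :
    blockIndex p (y + d * p) = blockIndex p y + d := by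
  have hshift : y + d * p - 1 = y - 1 + d * p := by omega
  rw [blockIndex, blockIndex, hshift, Nat.add_mul_div_right _ _ hp]
  omega

theorem blockOffset_add_mul {p y : ℕ} (hy : 1 ≤ y) (d : ℕ) :
    blockOffset p (y + d * p) = blockOffset p y := by
  have hshift : y + d * p - 1 = y - 1 + d * p := by omega
  rw [blockOffset, blockOffset, hshift, Nat.add_mul_mod_self_right]

theorem blockIndex_le {p y N : ℕ} (hy : 1 ≤ y) (hyN : y ≤ p * N) : blockIndex p y ≤ N := by
  have hp : 0 < p := Nat.pos_of_ne_zero fun h => by subst h; omega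
  have hlt : (y - 1) / p < N := (Nat.div_lt_iff_lt_mul hp).2 (by rw [mul_comm]; omega)
  exact Nat.succ_le_of_lt hlt

theorem eq_of_blockType_apply_eq {q p : ℕ} {B ρ : ℕ → ℕ → ℕ}
    (hal : ∀ i c j, i < q → j < p → B i j = c → j = ρ i c)
    (hinj : ∀ c i i', i < q → i' < q → i ≠ i' → ρ i c ≠ ρ i' c)
    {i i' j : ℕ} (hi : i < q) (hi' : i' < q) (hj : j < p) (h : B i j = B i' j) : i = i' := by
  by_contra hne
  exact hinj _ _ _ hi hi' hne ((hal _ _ _ hi hj h).symm.trans (hal _ _ _ hi' hj rfl))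

theorem blocks_same_type_general (p k N q m x : ℕ)
    (B : ℕ → ℕ → ℕ) (τ : ℕ → ℕ) (hτ : ∀ t, 1 ≤ t → t ≤ N → τ t < q)
    (ρ : ℕ → ℕ → ℕ)
    (hal : ∀ i c j, i < q → j < p → B i j = c → j = ρ i c)
    (hinj : ∀ c i i', i < q → i' < q → i ≠ i' → ρ i c ≠ ρ i' c)
    (hx : 1 ≤ x) (hub : x + (k - 1) * (m * p) ≤ p * N)
    (hmono : ∀ i < k,
        B (τ ((x + i * (m * p) - 1) / p + 1)) ((x + i * (m * p) - 1) % p)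
          = B (τ ((x - 1) / p + 1)) ((x - 1) % p)) :
    (∀ i < k, τ ((x + i * (m * p) - 1) / p + 1) = τ ((x - 1) / p + 1)) ∧
    (∀ i < k, (x + i * (m * p) - 1) / p + 1 = ((x - 1) / p + 1) + i * m) := by
  have hp : 0 < p := Nat.pos_of_ne_zero fun h => by subst h; omega
  have hterm : ∀ i, x + i * (m * p) = x + (i * m) * p := fun i => by rw [mul_assoc]
  have hindex : ∀ i, blockIndex p (x + i * (m * p)) = blockIndex p x + i * m := fun i => by
    rw [hterm, blockIndex_add_mul hx hp]
  have hoffset : ∀ i, blockOffset p (x + i * (m * p)) = blockOffset p x := fun i => by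
    rw [hterm, blockOffset_add_mul hx]
  have hin : ∀ i < k, blockIndex p (x + i * (m * p)) ≤ N := fun i hi =>
    blockIndex_le (by omega) (le_trans (by gcongr; omega) hub)
  refine ⟨fun i hi => ?_, fun i _ => hindex i⟩
  have hfirst : blockIndex p x ≤ N := by simpa using hin 0 (by omega)
  change τ (blockIndex p (x + i * (m * p))) = τ (blockIndex p x)
  refine eq_of_blockType_apply_eq (j := blockOffset p x) hal hinj
    (hτ _ (Nat.le_add_left _ _) (hin i hi)) (hτ _ (Nat.le_add_left _ _) hfirst) (Nat.mod_lt _ hp) ?_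
  calc B (τ (blockIndex p (x + i * (m * p)))) (blockOffset p x)
      = B (τ (blockIndex p (x + i * (m * p)))) (blockOffset p (x + i * (m * p))) := by
        rw [hoffset]
    _ = B (τ (blockIndex p x)) (blockOffset p x) := hmono i hi

/-- If a coloring of `{1,...,pN}` is built from `N` consecutive blocks of
length `p`, each a block-type `B (τ t)` in which every color occupies a unique
position `ρ i c` (distinct types giving distinct positions), then any
monochromatic `k`-term AP with common difference `m*p` has all its terms in
blocks of the same type, and its block indices form an AP with difference `m`. -/
theorem blocks_same_type (p k N q m x : ℕ) (hp : p.Prime) (hpk : p ≤ k)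
    (B : ℕ → ℕ → ℕ) (τ : ℕ → ℕ) (hτ : ∀ t, 1 ≤ t → t ≤ N → τ t < q)
    (ρ : ℕ → ℕ → ℕ)
    (hal : ∀ i c j, i < q → j < p → B i j = c → j = ρ i c)
    (hinj : ∀ c i i', i < q → i' < q → i ≠ i' → ρ i c ≠ ρ i' c)
    (hm : 1 ≤ m) (hx : 1 ≤ x) (hub : x + (k - 1) * (m * p) ≤ p * N)
    (hmono : ∀ i < k,
        B (τ ((x + i * (m * p) - 1) / p + 1)) ((x + i * (m * p) - 1) % p)
          = B (τ ((x - 1) / p + 1)) ((x - 1) % p)) :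
    (∀ i < k, τ ((x + i * (m * p) - 1) / p + 1) = τ ((x - 1) / p + 1)) ∧
    (∀ i < k, (x + i * (m * p) - 1) / p + 1 = ((x - 1) / p + 1) + i * m) :=
  blocks_same_type_general p k N q m x B τ hτ ρ hal hinj hx hub hmono
end

section
/- Let p be prime and r > p with r - ⌈r/p⌉ ≥ 1. Define blocks S_i (i ∈ {1,...,r}) as the p-tuples with j-th entry ((i+j-2) mod r)+1, and exclude the ⌈r/p⌉ blocks S_{1+pm} for m ∈ {0, 1, ..., ⌈r/p⌉ - 1}. Then for each color c ∈ {1,...,r}, the set of residues modulo p of positions at which c appears, across all non-excluded blocks, has size at most p - 1. -/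
/-!
Take the residue class of `c` mod `p`: it meets the positions `1, …, p` of a block in exactly one
position `j`, and `j ≤ c`. Position `j` of block `S_i` carries color `c` only when `i + j = c + 1`,
so `i - 1 = c - j` is a multiple of `p` not exceeding `r - 1`, i.e. `S_i` is one of the excluded
blocks `S_{1+pm}`. Hence no remaining block has color `c` at a position `≡ c (mod p)`.
-/

theorem Sblock_eq_iff {r i j c : ℕ} (hi : 1 ≤ i) (hir : i ≤ r) (hj : 1 ≤ j) (hjc : j ≤ c)
    (hcr : c ≤ r) : Sblock r i j = c ↔ i + j = c + 1 := by
  unfold Sblock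
  rcases lt_or_ge (i + j - 2) r with h | h
  · rw [Nat.mod_eq_of_lt h]
    omega
  · rw [Nat.mod_eq_sub_mod h, Nat.mod_eq_of_lt (by omega)]
    omega

theorem Nat.le_of_mod_eq_of_le {j c p : ℕ} (hjp : j ≤ p) (hc : 1 ≤ c)
    (h : j % p = c % p) : j ≤ c := by
  by_contra! hcj
  rw [Nat.mod_eq_of_lt (hcj.trans_le hjp)] at h
  rcases hjp.lt_or_eq with hjp | rfl
  · rw [Nat.mod_eq_of_lt hjp] at h
    omega
  · rw [Nat.mod_self] at h
    omega

theorem Sblock_ne_of_mod_eq {r p i j c : ℕ} (hi : 1 ≤ i) (hir : i ≤ r)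
    (hnex : ¬ ∃ m < (r + p - 1) / p, i = 1 + p * m) (hj : 1 ≤ j) (hjp : j ≤ p)
    (hc : 1 ≤ c) (hcr : c ≤ r) (hjc : j % p = c % p) : Sblock r i j ≠ c := by
  have hle : j ≤ c := Nat.le_of_mod_eq_of_le hjp hc hjc
  rw [Ne, Sblock_eq_iff hi hir hj hle hcr]
  intro hsum
  obtain ⟨m, hm⟩ := (Nat.modEq_iff_dvd' hle).mp hjc
  refine hnex ⟨m, ?_, by omega⟩
  rw [Nat.lt_iff_add_one_le, Nat.le_div_iff_mul_le (by omega), add_mul, one_mul, mul_comm]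
  omega

theorem excluded_blocks_miss_residue_general (r p : ℕ) (hp : p.Prime) :
    ∀ c, 1 ≤ c → c ≤ r →
      (((((Finset.Icc 1 r).filter
            (fun i => ¬ ∃ m < (r + p - 1) / p, i = 1 + p * m)) ×ˢ
          Finset.Icc 1 p).filter (fun q => Sblock r q.1 q.2 = c)).image
        (fun q => q.2 % p)).card ≤ p - 1 := by
  intro c hc hcr
  have hcp : c % p ∈ Finset.range p := Finset.mem_range.2 (Nat.mod_lt _ hp.pos)
  calc _ ≤ ((Finset.range p).erase (c % p)).card := by
        refine Finset.card_le_card ?_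
        simp only [Finset.subset_iff, Finset.mem_image, Finset.mem_filter, Finset.mem_product,
          Finset.mem_Icc, Finset.mem_erase, Finset.mem_range]
        rintro _ ⟨⟨i, j⟩, ⟨⟨⟨⟨hi, hir⟩, hnex⟩, hj, hjp⟩, hS⟩, rfl⟩
        exact ⟨fun hjc => Sblock_ne_of_mod_eq hi hir hnex hj hjp hc hcr hjc hS,
          Nat.mod_lt _ hp.pos⟩
    _ = p - 1 := by rw [Finset.card_erase_of_mem hcp, Finset.card_range]

/-- Lemma 1, case `r > p`: removing the `⌈r/p⌉` blocks `S_{1+pm}`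
(`0 ≤ m < ⌈r/p⌉`) leaves, for each color `c`, positions whose residues mod `p`
across all remaining blocks form a set of size at most `p - 1`. -/
theorem excluded_blocks_miss_residue (r p : ℕ) (hp : p.Prime) (hrp : p < r)
    (hsub : 1 ≤ r - (r + p - 1) / p) :
    ∀ c, 1 ≤ c → c ≤ r →
      (((((Finset.Icc 1 r).filter
            (fun i => ¬ ∃ m < (r + p - 1) / p, i = 1 + p * m)) ×ˢ
          Finset.Icc 1 p).filter (fun q => Sblock r q.1 q.2 = c)).image
        (fun q => q.2 % p)).card ≤ p - 1 :=
  excluded_blocks_miss_residue_general r p hp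
end
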